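/- For every λ ∈ P^m_n and all 1 ≤ i < j ≤ n, one has k_{i,j}(λ) ≥ k_{i,j−1}(λ); that is, for fixed first index i the recursively defined entries weakly increase in the second index. -/
import Mathlib


/-- `lam` (indexed `1,…,n`) is a type-A partition of size `(n,m)`:
weakly decreasing with `0 ≤ lam i ≤ m (n - i + 1)` for `1 ≤ i ≤ n`. -/
def IsTypeAPartition (n m : ℕ) (lam : ℕ → ℤ) : Prop :=
  (∀ i : ℕ, 1 ≤ i → i ≤ n → 0 ≤ lam i ∧ lam i ≤ (m : ℤ) * ((n : ℤ) - (i : ℤ) + 1)) ∧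
  (∀ i : ℕ, 1 ≤ i → i < n → lam (i + 1) ≤ lam i)

/-- `K` satisfies, on the triangular domain `1 ≤ i ≤ j ≤ n`, the defining recursion of
the entries `k_{i,j}(lam)`:
`k_{i,j} = min(m, ⌈(lam_i − Σ_{l=j+1}^n k_{i,l} + Σ_{l=i+1}^j k_{l,j})/(j−i+1)⌉)`.
(This recursion is well founded and determines `K` uniquely on the domain.) -/
def TableauRec (n m : ℕ) (lam : ℕ → ℤ) (K : ℕ → ℕ → ℤ) : Prop :=
  ∀ i j : ℕ, 1 ≤ i → i ≤ j → j ≤ n →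
    K i j = min (m : ℤ)
      ⌈(((lam i - ∑ l ∈ Finset.Icc (j + 1) n, K i l
          + ∑ l ∈ Finset.Icc (i + 1) j, K l j : ℤ) : ℚ)
        / ((j : ℚ) - (i : ℚ) + 1))⌉

lemma ceil_le_iff' {a b c : ℤ} (hb : 0 < b) :
    ⌈(a:ℚ)/(b:ℚ)⌉ ≤ c ↔ a ≤ b * c := by
  have hbq : (0:ℚ) < (b:ℚ) := by exact_mod_cast hb
  rw [Int.ceil_le, div_le_iff₀ hbq]
  constructor
  · intro h
    have : (a:ℚ) ≤ ((b*c : ℤ):ℚ) := by push_cast; linarith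
    exact_mod_cast this
  · intro h
    have : ((a:ℤ):ℚ) ≤ ((b*c:ℤ):ℚ) := by exact_mod_cast h
    push_cast at this; linarith

lemma lt_of_le_ceil'' {a b c : ℤ} (hb : 0 < b) (h : c ≤ ⌈(a:ℚ)/(b:ℚ)⌉) :
    b*(c-1) < a := by
  by_contra h'
  push_neg at h'
  have := (ceil_le_iff' hb).mpr h'
  omega

lemma le_mul_ceil' {a b : ℤ} (hb : 0 < b) : a ≤ b * ⌈(a:ℚ)/(b:ℚ)⌉ :=
  (ceil_le_iff' hb).mp le_rfl

lemma rec_facts (m k a b : ℤ) (hb : 0 < b) (h : k = min m ⌈(a:ℚ)/(b:ℚ)⌉) :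
    k ≤ m ∧ b*(k-1) < a ∧ (k = m ∨ a ≤ b * k) := by
  refine ⟨h ▸ min_le_left _ _, lt_of_le_ceil'' hb (h ▸ min_le_right _ _), ?_⟩
  rcases le_total m ⌈(a:ℚ)/(b:ℚ)⌉ with hc | hc
  · left; rw [h, min_eq_left hc]
  · right; rw [h, min_eq_right hc]; exact le_mul_ceil' hb

lemma rec_nonneg (m k a b : ℤ) (hb : 0 < b) (hm : 0 ≤ m) (ha : 0 ≤ a)
    (h : k = min m ⌈(a:ℚ)/(b:ℚ)⌉) : 0 ≤ k := by
  rw [h]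
  exact le_min hm (Int.ceil_nonneg (div_nonneg (by exact_mod_cast ha) (by exact_mod_cast hb.le)))

lemma rec_le (m k a b c : ℤ) (hb : 0 < b) (h : k = min m ⌈(a:ℚ)/(b:ℚ)⌉)
    (hac : a ≤ b*c) : k ≤ c :=
  le_trans (h ▸ min_le_right m _) ((ceil_le_iff' hb).mpr hac)

set_option maxHeartbeats 1000000 in
theorem tableau_master (n m : ℕ) (hn : 1 ≤ n) (hm : 1 ≤ m)
    (lam : ℕ → ℤ) (hlam : IsTypeAPartition n m lam)
    (K : ℕ → ℕ → ℤ) (hK : TableauRec n m lam K) :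
    ∀ t s i j : ℕ, 1 ≤ i → i ≤ j → j ≤ n → n - j = t → j - i = s →
      (0 ≤ K i j ∧ K i j ≤ (m:ℤ) ∧
       (∑ l ∈ Finset.Icc j n, K i l) ≤ lam i ∧
       lam i ≤ (∑ l ∈ Finset.Icc j n, K i l) + ((j:ℤ) - (i:ℤ)) * K i j ∧
       (j < n → K i j ≤ K i (j+1)) ∧
       (i + 1 ≤ n → lam (i+1) - ∑ l ∈ Finset.Icc (j+1) n, K (i+1) l
          ≤ lam i - ∑ l ∈ Finset.Icc (j+1) n, K i l)) := by
  have row_split : ∀ (r a : ℕ), a ≤ n →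
      ∑ l ∈ Finset.Icc a n, K r l = K r a + ∑ l ∈ Finset.Icc (a+1) n, K r l := by
    intro r a ha
    rw [Finset.Icc_eq_cons_Ioc ha, Finset.sum_cons, Finset.Icc_add_one_left_eq_Ioc]
  have recat : ∀ i' j', 1 ≤ i' → i' ≤ j' → j' ≤ n →
      K i' j' = min (m:ℤ)
        ⌈(((lam i' - ∑ l ∈ Finset.Icc (j'+1) n, K i' l
            + ∑ l ∈ Finset.Icc (i'+1) j', K l j' : ℤ)):ℚ)
          / (((j':ℤ) - (i':ℤ) + 1 : ℤ):ℚ)⌉ := by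
    intro i' j' a b c
    have h0 := hK i' j' a b c
    have hd : ((j':ℚ) - (i':ℚ) + 1) = (((j':ℤ) - (i':ℤ) + 1 : ℤ):ℚ) := by push_cast; ring
    rw [hd] at h0
    exact h0
  intro t
  induction t using Nat.strong_induction_on with
  | _ t iht =>
  intro s
  induction s using Nat.strong_induction_on with
  | _ s ihs =>
  intro i j h1 hij hjn ht hs
  have cell_lower : ∀ l, i < l → l ≤ j →
      (0 ≤ K l j ∧ K l j ≤ (m:ℤ) ∧
       (∑ l' ∈ Finset.Icc j n, K l l') ≤ lam l ∧
       lam l ≤ (∑ l' ∈ Finset.Icc j n, K l l') + ((j:ℤ) - (l:ℤ)) * K l j ∧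
       (j < n → K l j ≤ K l (j+1)) ∧
       (l + 1 ≤ n → lam (l+1) - ∑ l' ∈ Finset.Icc (j+1) n, K (l+1) l'
          ≤ lam l - ∑ l' ∈ Finset.Icc (j+1) n, K l l')) := by
    intro l hl1 hl2
    exact ihs (j - l) (by omega) l j (by omega) hl2 hjn ht rfl
  have cell_right : ∀ i' j', 1 ≤ i' → i' ≤ j' → j' ≤ n → j < j' →
      (0 ≤ K i' j' ∧ K i' j' ≤ (m:ℤ) ∧
       (∑ l ∈ Finset.Icc j' n, K i' l) ≤ lam i' ∧
       lam i' ≤ (∑ l ∈ Finset.Icc j' n, K i' l) + ((j':ℤ) - (i':ℤ)) * K i' j' ∧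
       (j' < n → K i' j' ≤ K i' (j'+1)) ∧
       (i' + 1 ≤ n → lam (i'+1) - ∑ l ∈ Finset.Icc (j'+1) n, K (i'+1) l
          ≤ lam i' - ∑ l ∈ Finset.Icc (j'+1) n, K i' l)) := by
    intro i' j' a b c d
    exact iht (n - j') (by omega) (j' - i') i' j' a b c rfl rfl
  have hb : (0:ℤ) < (j:ℤ) - (i:ℤ) + 1 := by omega
  have hrec := recat i j h1 hij hjn
  obtain ⟨hQ2, hU, hL⟩ := rec_facts _ _ _ _ hb hrec
  -- Q6 : monotonicity of lam_r - tail in r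
  have hQ6 : i + 1 ≤ n → lam (i+1) - ∑ l ∈ Finset.Icc (j+1) n, K (i+1) l
      ≤ lam i - ∑ l ∈ Finset.Icc (j+1) n, K i l := by
    intro hin
    rcases Nat.lt_or_ge j n with hjn' | hjn'
    · have hcell := cell_right i (j+1) h1 (by omega) (by omega) (by omega)
      have hQ6' := hcell.2.2.2.2.2 hin
      have hcm : K i (j+1) ≤ (m:ℤ) := hcell.2.1
      have hb1 : (0:ℤ) < ((j+1:ℕ):ℤ) - (i:ℤ) + 1 := by push_cast; omega
      have hr1 := recat i (j+1) h1 (by omega) (by omega)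
      obtain ⟨-, hU1, -⟩ := rec_facts _ _ _ _ hb1 hr1
      have hb2 : (0:ℤ) < ((j+1:ℕ):ℤ) - ((i+1:ℕ):ℤ) + 1 := by push_cast; omega
      have hr2 := recat (i+1) (j+1) (by omega) (by omega) (by omega)
      obtain ⟨-, -, hL2⟩ := rec_facts _ _ _ _ hb2 hr2
      have hs1 := row_split i (j+1) (by omega)
      have hs2 := row_split (i+1) (j+1) (by omega)
      have hs3 : ∑ l ∈ Finset.Icc (i+1) (j+1), K l (j+1)
          = K (i+1) (j+1) + ∑ l ∈ Finset.Icc (i+1+1) (j+1), K l (j+1) := by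
        rw [Finset.Icc_eq_cons_Ioc (by omega : i+1 ≤ j+1), Finset.sum_cons, Finset.Icc_add_one_left_eq_Ioc]
      rw [hs1, hs2]
      rw [hs3] at hU1
      rcases hL2 with he | hA2
      · rw [he]
        linarith [hQ6', hcm]
      · push_cast at hU1 hA2
        rcases le_or_gt (K i (j+1)) (K (i+1) (j+1)) with hce | hce
        · linarith [hQ6']
        · have hd0 : (0:ℤ) ≤ K i (j+1) - 1 - K (i+1) (j+1) := by linarith
          have hb1' : (1:ℤ) ≤ (j:ℤ) - (i:ℤ) + 2 := by omega
          have hmul : (K i (j+1) - 1 - K (i+1) (j+1)) * 1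
              ≤ (K i (j+1) - 1 - K (i+1) (j+1)) * ((j:ℤ) - (i:ℤ) + 2) :=
            mul_le_mul_of_nonneg_left hb1' hd0
          have hlt : K i (j+1) - K (i+1) (j+1) - 1
              < (lam i - ∑ l ∈ Finset.Icc (j+1+1) n, K i l)
                - (lam (i+1) - ∑ l ∈ Finset.Icc (j+1+1) n, K (i+1) l) := by
            nlinarith [hU1, hA2, hQ6', hmul]
          omega
    · have hempty : Finset.Icc (j+1) n = ∅ := Finset.Icc_eq_empty (by omega)
      rw [hempty]
      simp only [Finset.sum_empty]
      have := hlam.2 i h1 (by omega)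
      linarith
  -- nonnegativity of the remaining budget D and of the column sum C
  have hD0 : 0 ≤ lam i - ∑ l ∈ Finset.Icc (j+1) n, K i l := by
    rcases Nat.lt_or_ge j n with hjn' | hjn'
    · have h3 := (cell_right i (j+1) h1 (by omega) (by omega) (by omega)).2.2.1
      linarith
    · have hempty : Finset.Icc (j+1) n = ∅ := Finset.Icc_eq_empty (by omega)
      rw [hempty]
      simp only [Finset.sum_empty]
      have := (hlam.1 i h1 (le_trans hij hjn)).1
      linarith
  have hC0 : 0 ≤ ∑ l ∈ Finset.Icc (i+1) j, K l j := by
    apply Finset.sum_nonneg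
    intro l hl
    have hm' := Finset.mem_Icc.mp hl
    exact (cell_lower l (by omega) hm'.2).1
  have hQ1 : 0 ≤ K i j :=
    rec_nonneg _ _ _ _ hb (by exact_mod_cast Nat.zero_le m) (by linarith) hrec
  -- Q3 : tail bound
  have hchain : ∀ r, i ≤ r → r ≤ j →
      lam r - ∑ l ∈ Finset.Icc (j+1) n, K r l
        ≤ lam i - ∑ l ∈ Finset.Icc (j+1) n, K i l := by
    intro r hir
    induction r, hir using Nat.le_induction with
    | base => intro _; exact le_rfl
    | succ r hir ih =>
      intro hrj
      have hr1n : r + 1 ≤ n := le_trans hrj hjn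
      have step : lam (r+1) - ∑ l ∈ Finset.Icc (j+1) n, K (r+1) l
          ≤ lam r - ∑ l ∈ Finset.Icc (j+1) n, K r l := by
        rcases Nat.eq_or_lt_of_le hir with he | hlt
        · subst he
          exact hQ6 hr1n
        · exact (cell_lower r hlt (by omega)).2.2.2.2.2 hr1n
      exact le_trans step (ih (by omega))
  have hterm : ∀ l ∈ Finset.Icc (i+1) j, K l j
      ≤ lam i - ∑ l' ∈ Finset.Icc (j+1) n, K i l' := by
    intro l hl
    have hm' := Finset.mem_Icc.mp hl
    have hc := cell_lower l (by omega) hm'.2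
    have h3 := hc.2.2.1
    rw [row_split l j hjn] at h3
    have h4 := hchain l (by omega) hm'.2
    linarith
  have hCle : ∑ l ∈ Finset.Icc (i+1) j, K l j
      ≤ ((j:ℤ) - (i:ℤ)) * (lam i - ∑ l' ∈ Finset.Icc (j+1) n, K i l') := by
    have h := Finset.sum_le_card_nsmul (Finset.Icc (i+1) j) _ _ hterm
    rw [Nat.card_Icc] at h
    rw [show j + 1 - (i+1) = j - i from by omega] at h
    rw [nsmul_eq_mul] at h
    rw [Nat.cast_sub hij] at h
    exact h
  have hKD : K i j ≤ lam i - ∑ l ∈ Finset.Icc (j+1) n, K i l := by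
    apply rec_le (m:ℤ) (K i j) _ _ _ hb hrec
    have hexp : ((j:ℤ) - (i:ℤ) + 1) * (lam i - ∑ l ∈ Finset.Icc (j+1) n, K i l)
        = ((j:ℤ) - (i:ℤ)) * (lam i - ∑ l ∈ Finset.Icc (j+1) n, K i l)
          + (lam i - ∑ l ∈ Finset.Icc (j+1) n, K i l) := by ring
    linarith
  have hQ3 : (∑ l ∈ Finset.Icc j n, K i l) ≤ lam i := by
    rw [row_split i j hjn]
    linarith
  -- Q4 : lower bound
  have hQ4 : lam i ≤ (∑ l ∈ Finset.Icc j n, K i l) + ((j:ℤ) - (i:ℤ)) * K i j := by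
    rw [row_split i j hjn]
    rcases hL with hKm' | hA
    · rcases Nat.lt_or_ge j n with hjn' | hjn'
      · have hcell := cell_right i (j+1) h1 (by omega) (by omega) (by omega)
        have h4 := hcell.2.2.2.1
        have h2 := hcell.2.1
        push_cast at h4
        have hmul : ((j:ℤ) + 1 - (i:ℤ)) * K i (j+1) ≤ ((j:ℤ) + 1 - (i:ℤ)) * (m:ℤ) :=
          mul_le_mul_of_nonneg_left h2 (by omega)
        have hexp : ((j:ℤ) + 1 - (i:ℤ)) * (m:ℤ) = (m:ℤ) + ((j:ℤ) - (i:ℤ)) * (m:ℤ) := by ring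
        rw [hKm']
        linarith
      · have hempty : Finset.Icc (j+1) n = ∅ := Finset.Icc_eq_empty (by omega)
        have h5 := (hlam.1 i h1 (le_trans hij hjn)).2
        have hjz : (j:ℤ) = (n:ℤ) := by omega
        rw [← hjz] at h5
        rw [hempty]
        simp only [Finset.sum_empty]
        have hexp : (m:ℤ) * ((j:ℤ) - (i:ℤ) + 1) = (m:ℤ) + ((j:ℤ) - (i:ℤ)) * (m:ℤ) := by ring
        rw [hKm']
        linarith
    · have hexp : ((j:ℤ) - (i:ℤ) + 1) * K i j = K i j + ((j:ℤ) - (i:ℤ)) * K i j := by ring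
      linarith
  -- Q5 : row monotonicity
  have hQ5 : j < n → K i j ≤ K i (j+1) := by
    intro hjn'
    have hb1 : (0:ℤ) < ((j+1:ℕ):ℤ) - (i:ℤ) + 1 := by push_cast; omega
    have hr1 := recat i (j+1) h1 (by omega) (by omega)
    obtain ⟨hcm, -, hL1⟩ := rec_facts _ _ _ _ hb1 hr1
    rcases hL1 with he | hA1
    · rw [he]; exact hQ2
    · have hs1 := row_split i (j+1) (by omega)
      have hs3 : ∑ l ∈ Finset.Icc (i+1) (j+1), K l (j+1)
          = (∑ l ∈ Finset.Icc (i+1) j, K l (j+1)) + K (j+1) (j+1) :=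
        Finset.sum_Icc_succ_top (by omega) _
      have h0jj : 0 ≤ K (j+1) (j+1) :=
        (cell_right (j+1) (j+1) (by omega) le_rfl (by omega) (by omega)).1
      have hmono : (∑ l ∈ Finset.Icc (i+1) j, K l j)
          ≤ ∑ l ∈ Finset.Icc (i+1) j, K l (j+1) := by
        apply Finset.sum_le_sum
        intro l hl
        have hm' := Finset.mem_Icc.mp hl
        exact (cell_lower l (by omega) hm'.2).2.2.2.2.1 hjn'
      apply rec_le (m:ℤ) (K i j) _ _ (K i (j+1)) hb hrec
      rw [hs3] at hA1
      push_cast at hA1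
      have hexp : ((j:ℤ) + 1 - (i:ℤ) + 1) * K i (j+1)
          = ((j:ℤ) - (i:ℤ) + 1) * K i (j+1) + K i (j+1) := by ring
      rw [hs1]
      linarith
  exact ⟨hQ1, hQ2, hQ3, hQ4, hQ5, hQ6⟩

/-- For every `lam ∈ P^m_n` and all `1 ≤ i < j ≤ n`, one has
`k_{i,j}(lam) ≥ k_{i,j−1}(lam)`: for fixed first index the entries weakly increase in
the second index. -/
theorem tableau_rows_increase (n m : ℕ) (hn : 1 ≤ n) (hm : 1 ≤ m)
    (lam : ℕ → ℤ) (hlam : IsTypeAPartition n m lam)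
    (K : ℕ → ℕ → ℤ) (hK : TableauRec n m lam K) :
    ∀ i j : ℕ, 1 ≤ i → i < j → j ≤ n → K i (j - 1) ≤ K i j := by
  intro i j h1 hij hjn
  have h := (tableau_master n m hn hm lam hlam K hK (n - (j-1)) ((j-1) - i) i (j-1)
    h1 (by omega) (by omega) rfl rfl).2.2.2.2.1
  have h2 := h (by omega)
  rwa [show j - 1 + 1 = j from by omega] at h2
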